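/- arXiv:2412.15530 — 3 statements merged into one kernel-verified Lean document; each statement's English description precedes it below -/
import Mathlib

section
/- Let Σ and Σ̂ be symmetric p×p matrices, S ⊆ {1,…,p} with |S| = s, and suppose δᵀΣδ ≥ κ₁‖δ‖₂² for all δ in the cone C(S,3). If ‖Σ̂ − Σ‖_max ≤ κ₁/(32 s), then δᵀΣ̂δ ≥ (κ₁/2)‖δ‖₂² for all δ ∈ C(S,3). -/
open Finset Matrix

/-- Restricted eigenvalue condition transfers from Σ to Σ̂
when ‖Σ̂ − Σ‖_max ≤ κ₁/(32 s). -/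
theorem stmt3 {p s : ℕ} (A Ahat : Matrix (Fin p) (Fin p) ℝ)
    (hA : A.IsSymm) (hAhat : Ahat.IsSymm)
    (S : Finset (Fin p)) (hcard : S.card = s)
    (κ₁ : ℝ) (hκ : 0 < κ₁)
    (hRE : ∀ δ : Fin p → ℝ, ∑ i ∈ Sᶜ, |δ i| ≤ 3 * ∑ i ∈ S, |δ i| →
      κ₁ * ∑ i, (δ i)^2 ≤ δ ⬝ᵥ A.mulVec δ)
    (hmax : ∀ i j, |Ahat i j - A i j| ≤ κ₁ / (32 * s)) :
    ∀ δ : Fin p → ℝ, ∑ i ∈ Sᶜ, |δ i| ≤ 3 * ∑ i ∈ S, |δ i| →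
      (κ₁ / 2) * ∑ i, (δ i)^2 ≤ δ ⬝ᵥ Ahat.mulVec δ := by
  intro δ hδ
  have hsum_nonneg : (0:ℝ) ≤ ∑ i, (δ i)^2 := Finset.sum_nonneg fun i _ => sq_nonneg _
  have hREδ := hRE δ hδ
  by_cases hs : s = 0
  · have hAeq : Ahat = A := by
      ext i j
      have h := hmax i j
      rw [hs] at h
      simp at h
      have : Ahat i j - A i j = 0 := abs_nonpos_iff.mp (by simpa using h)
      linarith
    rw [hAeq]
    nlinarith
  · have hs' : (0:ℝ) < (s:ℝ) := by
      exact_mod_cast Nat.pos_of_ne_zero hs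
    set ε := κ₁ / (32 * s) with hε
    have hεpos : 0 ≤ ε := by positivity
    -- error term bound
    have hdecomp : δ ⬝ᵥ Ahat.mulVec δ
        = δ ⬝ᵥ A.mulVec δ + ∑ i, ∑ j, δ i * ((Ahat i j - A i j) * δ j) := by
      simp only [dotProduct, Matrix.mulVec, dotProduct]
      rw [← Finset.sum_add_distrib]
      congr 1; ext i
      rw [Finset.mul_sum, Finset.mul_sum, ← Finset.sum_add_distrib]
      congr 1; ext j; ring
    have hE : |∑ i, ∑ j, δ i * ((Ahat i j - A i j) * δ j)| ≤ ε * (∑ i, |δ i|)^2 := by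
      calc |∑ i, ∑ j, δ i * ((Ahat i j - A i j) * δ j)|
          ≤ ∑ i, ∑ j, |δ i| * (ε * |δ j|) := by
            refine (Finset.abs_sum_le_sum_abs _ _).trans ?_
            refine Finset.sum_le_sum fun i _ => ?_
            refine (Finset.abs_sum_le_sum_abs _ _).trans ?_
            refine Finset.sum_le_sum fun j _ => ?_
            rw [abs_mul, abs_mul]
            exact mul_le_mul_of_nonneg_left
              (mul_le_mul_of_nonneg_right (hmax i j) (abs_nonneg _)) (abs_nonneg _)
        _ = ε * (∑ i, |δ i|)^2 := by
            rw [sq, Finset.sum_mul_sum]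
            rw [Finset.mul_sum]
            congr 1; ext i
            rw [Finset.mul_sum]
            congr 1; ext j; ring
    -- ℓ1 bound
    have h1 : ∑ i, |δ i| ≤ 4 * ∑ i ∈ S, |δ i| := by
      rw [← Finset.sum_add_sum_compl S]
      linarith
    have hSnn : (0:ℝ) ≤ ∑ i ∈ S, |δ i| :=
      Finset.sum_nonneg fun i _ => abs_nonneg _
    have hCS : (∑ i ∈ S, |δ i|)^2 ≤ (s:ℝ) * ∑ i, (δ i)^2 := by
      have := sq_sum_le_card_mul_sum_sq (s := S) (f := fun i => |δ i|)
      rw [hcard] at this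
      refine this.trans ?_
      have h2 : ∑ i ∈ S, |δ i|^2 ≤ ∑ i, (δ i)^2 := by
        calc ∑ i ∈ S, |δ i|^2 = ∑ i ∈ S, (δ i)^2 := by
              apply Finset.sum_congr rfl; intro i _; rw [sq_abs]
          _ ≤ ∑ i, (δ i)^2 := Finset.sum_le_sum_of_subset_of_nonneg
              (Finset.subset_univ S) (fun i _ _ => sq_nonneg _)
      nlinarith [h2, hs'.le]
    have hl1sq : (∑ i, |δ i|)^2 ≤ 16 * ((s:ℝ) * ∑ i, (δ i)^2) := by
      have hnn : (0:ℝ) ≤ ∑ i, |δ i| := Finset.sum_nonneg fun i _ => abs_nonneg _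
      nlinarith
    have hεbound : ε * (∑ i, |δ i|)^2 ≤ (κ₁/2) * ∑ i, (δ i)^2 := by
      have : ε * (∑ i, |δ i|)^2 ≤ ε * (16 * ((s:ℝ) * ∑ i, (δ i)^2)) :=
        mul_le_mul_of_nonneg_left hl1sq hεpos
      refine this.trans (le_of_eq ?_)
      rw [hε]
      field_simp
      ring
    rw [hdecomp]
    have := abs_le.mp hE
    nlinarith
end

section
/- Let β, β̂ ∈ ℝ^p be nonzero vectors and let P(v) = v vᵀ/‖v‖₂² denote the orthogonal projection onto span(v). Then ‖P(β̂) − P(β)‖_F ≤ 4 ‖β̂ − β‖₂ / ‖β‖₂. -/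
/-!
Write `a = ‖β̂‖²`, `b = ‖β‖²`, `c = ⟨β, β̂⟩`. Expanding the entries gives
`‖P(β̂) - P(β)‖_F² = 2 - 2c²/(ab) = 2 (ab - c²)/(ab)`, while
`a ‖β̂ - β‖² - (ab - c²) = (a - c)² ≥ 0`. Hence `‖P(β̂) - P(β)‖_F² ≤ 2 ‖β̂ - β‖²/‖β‖²`,
which is stronger than the claim since `√2 ≤ 4`.
-/

open Finset

section

variable {ι : Type*} [Fintype ι]

lemma sum_sq_pos_of_ne_zero {x : ι → ℝ} (hx : x ≠ 0) : 0 < ∑ i, x i ^ 2 := by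
  obtain ⟨i, hi⟩ := Function.ne_iff.mp hx
  exact sum_pos' (fun j _ => sq_nonneg (x j)) ⟨i, mem_univ i, sq_pos_of_ne_zero hi⟩

lemma sum_sub_sq_eq (x y : ι → ℝ) :
    ∑ i, (x i - y i) ^ 2 = ∑ i, x i ^ 2 - 2 * ∑ i, y i * x i + ∑ i, y i ^ 2 := by
  simp only [sub_sq, sum_add_distrib, sum_sub_distrib, mul_sum]
  simp only [mul_assoc, mul_comm (x _)]

lemma sum_sum_sq_smul_outer_sub (x y : ι → ℝ) (s t : ℝ) :
    ∑ i, ∑ j, (s * (x i * x j) - t * (y i * y j)) ^ 2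
      = s ^ 2 * (∑ i, x i ^ 2) ^ 2 - 2 * (s * t) * (∑ i, y i * x i) ^ 2
        + t ^ 2 * (∑ i, y i ^ 2) ^ 2 := by
  have hexpand : ∀ i j, (s * (x i * x j) - t * (y i * y j)) ^ 2
      = s ^ 2 * (x i ^ 2 * x j ^ 2) - 2 * (s * t) * ((y i * x i) * (y j * x j))
        + t ^ 2 * (y i ^ 2 * y j ^ 2) := fun i j => by ring
  simp only [hexpand, sum_add_distrib, sum_sub_distrib, ← mul_sum, sq (∑ i, _), sum_mul_sum]

lemma sum_sq_mul_sum_sq_sub_sq_le (x y : ι → ℝ) :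
    (∑ i, x i ^ 2) * (∑ i, y i ^ 2) - (∑ i, y i * x i) ^ 2
      ≤ (∑ i, x i ^ 2) * ∑ i, (x i - y i) ^ 2 := by
  rw [sum_sub_sq_eq]
  nlinarith [sq_nonneg (∑ i, x i ^ 2 - ∑ i, y i * x i)]

lemma sum_sum_sq_proj_sub_proj {x y : ι → ℝ} (hx : x ≠ 0) (hy : y ≠ 0) :
    ∑ i, ∑ j, (x i * x j / ∑ k, x k ^ 2 - y i * y j / ∑ k, y k ^ 2) ^ 2
      = 2 * ((∑ i, x i ^ 2) * (∑ i, y i ^ 2) - (∑ i, y i * x i) ^ 2)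
          / ((∑ i, x i ^ 2) * ∑ i, y i ^ 2) := by
  have ha := (sum_sq_pos_of_ne_zero hx).ne'
  have hb := (sum_sq_pos_of_ne_zero hy).ne'
  simp only [div_eq_inv_mul _ (∑ k, _ ^ 2), sum_sum_sq_smul_outer_sub]
  field_simp
  ring

lemma sum_sum_sq_proj_sub_proj_le {x y : ι → ℝ} (hx : x ≠ 0) (hy : y ≠ 0) :
    ∑ i, ∑ j, (x i * x j / ∑ k, x k ^ 2 - y i * y j / ∑ k, y k ^ 2) ^ 2
      ≤ 2 * (∑ i, (x i - y i) ^ 2) / ∑ i, y i ^ 2 := by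
  have ha := sum_sq_pos_of_ne_zero hx
  have hb := sum_sq_pos_of_ne_zero hy
  rw [sum_sum_sq_proj_sub_proj hx hy, div_le_div_iff₀ (by positivity) hb]
  calc 2 * ((∑ i, x i ^ 2) * (∑ i, y i ^ 2) - (∑ i, y i * x i) ^ 2) * ∑ i, y i ^ 2
      ≤ 2 * ((∑ i, x i ^ 2) * ∑ i, (x i - y i) ^ 2) * ∑ i, y i ^ 2 := by
        gcongr
        exact sum_sq_mul_sum_sq_sub_sq_le x y
    _ = 2 * (∑ i, (x i - y i) ^ 2) * ((∑ i, x i ^ 2) * ∑ i, y i ^ 2) := by ring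

end

/-- ‖P(β̂) − P(β)‖_F ≤ 4‖β̂ − β‖₂/‖β‖₂ for rank-one projections. -/
theorem stmt7 {p : ℕ} (β βhat : Fin p → ℝ) (hβ : β ≠ 0) (hβhat : βhat ≠ 0) :
    Real.sqrt (∑ i, ∑ j,
      (βhat i * βhat j / (∑ k, (βhat k)^2) - β i * β j / (∑ k, (β k)^2))^2)
      ≤ 4 * Real.sqrt (∑ i, (βhat i - β i)^2) / Real.sqrt (∑ i, (β i)^2) := by
  have hD : 0 ≤ ∑ i, (βhat i - β i) ^ 2 := sum_nonneg fun i _ => sq_nonneg _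
  have hb := sum_sq_pos_of_ne_zero hβ
  calc Real.sqrt (∑ i, ∑ j,
        (βhat i * βhat j / (∑ k, (βhat k)^2) - β i * β j / (∑ k, (β k)^2))^2)
      ≤ Real.sqrt (4 ^ 2 * (∑ i, (βhat i - β i) ^ 2) / ∑ i, β i ^ 2) := by
        gcongr
        refine (sum_sum_sq_proj_sub_proj_le hβhat hβ).trans ?_
        gcongr
        norm_num
    _ = 4 * Real.sqrt (∑ i, (βhat i - β i)^2) / Real.sqrt (∑ i, (β i)^2) := by
        rw [Real.sqrt_div' _ hb.le, Real.sqrt_mul' _ hD, Real.sqrt_sq (by norm_num)]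
end

section
/- Let 0 < α ≤ 1 and φ > 0. Let C_{SS}, Ĉ_{SS} be invertible s×s matrices and C_{S^cS}, Ĉ_{S^cS} be (p−s)×s matrices. Assume ‖C_{SS}⁻¹‖_∞ ≤ φ, ‖C_{S^cS} C_{SS}⁻¹‖_∞ ≤ 1−α, φ‖Ĉ_{SS} − C_{SS}‖_∞ ≤ α/(4−α), and φ‖Ĉ_{S^cS} − C_{S^cS}‖_∞ ≤ α/(4−α). Then ‖Ĉ_{S^cS} Ĉ_{SS}⁻¹‖_∞ ≤ 1 − α/2. -/
open Finset Matrix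

attribute [local instance] Matrix.linftyOpNormedAddCommGroup

lemma stmt12_bridge {n m : ℕ} (A : Matrix (Fin n) (Fin m) ℝ) :
    (⨆ i, ∑ j, |A i j|) = ‖A‖ := by
  rcases isEmpty_or_nonempty (Fin n) with h | h
  · rw [Real.iSup_of_isEmpty, Matrix.linfty_opNorm_def]
    simp
  · apply le_antisymm
    · apply ciSup_le
      intro i
      rw [Matrix.linfty_opNorm_def]
      have h0 : ∑ j, |A i j| = ((∑ j, ‖A i j‖₊ : NNReal) : ℝ) := by
        push_cast
        simp [Real.norm_eq_abs]
      rw [h0]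
      exact NNReal.coe_le_coe.mpr
        (Finset.le_sup (f := fun i => ∑ j, ‖A i j‖₊) (Finset.mem_univ i))
    · rw [Matrix.linfty_opNorm_def]
      obtain ⟨i, _, hi⟩ := Finset.exists_mem_eq_sup (Finset.univ : Finset (Fin n))
        Finset.univ_nonempty (fun i => ∑ j, ‖A i j‖₊)
      rw [hi]
      have h0 : ((∑ j, ‖A i j‖₊ : NNReal) : ℝ) = ∑ j, |A i j| := by
        push_cast
        simp [Real.norm_eq_abs]
      rw [h0]
      exact le_ciSup (f := fun i => ∑ j, |A i j|)
        (Set.Finite.bddAbove (Set.finite_range _)) i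

set_option maxHeartbeats 1000000 in
/-- Transfer of the mutual incoherence condition from population
to sample matrices. -/
theorem stmt12 {s t : ℕ} (α φ : ℝ) (hα0 : 0 < α) (hα1 : α ≤ 1) (hφ : 0 < φ)
    (CSS ChatSS : Matrix (Fin s) (Fin s) ℝ)
    (CcS ChatcS : Matrix (Fin t) (Fin s) ℝ)
    (hCSS : IsUnit CSS.det) (hChatSS : IsUnit ChatSS.det)
    (h1 : (⨆ i, ∑ j, |CSS⁻¹ i j|) ≤ φ)
    (h2 : (⨆ i, ∑ j, |(CcS * CSS⁻¹) i j|) ≤ 1 - α)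
    (h3 : φ * (⨆ i, ∑ j, |ChatSS i j - CSS i j|) ≤ α / (4 - α))
    (h4 : φ * (⨆ i, ∑ j, |ChatcS i j - CcS i j|) ≤ α / (4 - α)) :
    (⨆ i, ∑ j, |(ChatcS * ChatSS⁻¹) i j|) ≤ 1 - α / 2 := by
  have hbr3 : (⨆ i, ∑ j, |ChatSS i j - CSS i j|) = ‖ChatSS - CSS‖ := by
    rw [← stmt12_bridge (ChatSS - CSS)]
    simp [Matrix.sub_apply]
  have hbr4 : (⨆ i, ∑ j, |ChatcS i j - CcS i j|) = ‖ChatcS - CcS‖ := by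
    rw [← stmt12_bridge (ChatcS - CcS)]
    simp [Matrix.sub_apply]
  rw [stmt12_bridge] at h1 h2 ⊢
  rw [hbr3] at h3
  rw [hbr4] at h4
  set K := CSS⁻¹
  set B := ChatSS⁻¹
  set Δ1 := ChatSS - CSS
  set Δ2 := ChatcS - CcS
  have hKC : K * CSS = 1 := Matrix.nonsing_inv_mul CSS hCSS
  have hCB : ChatSS * B = 1 := Matrix.mul_nonsing_inv ChatSS hChatSS
  -- identity 1 : B = K - K * Δ1 * B
  have hid1 : B = K - K * Δ1 * B := by
    have h0 : K * Δ1 * B = K - B := by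
      simp only [Δ1, Matrix.mul_sub, Matrix.sub_mul, Matrix.mul_assoc, hCB,
        Matrix.mul_one]
      rw [← Matrix.mul_assoc K CSS B, hKC, Matrix.one_mul]
    rw [h0]; abel
  -- identity 2 : ChatcS * B = Δ2 * B + CcS * K - (CcS * K) * Δ1 * B
  have hid2 : ChatcS * B = Δ2 * B + CcS * K - (CcS * K) * Δ1 * B := by
    have h5 : (CcS * K) * Δ1 * B = CcS * K - CcS * B := by
      simp only [Δ1, Matrix.mul_sub, Matrix.sub_mul, Matrix.mul_assoc, hCB,
        Matrix.mul_one]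
      rw [← Matrix.mul_assoc K CSS B, hKC, Matrix.one_mul]
    have h6 : Δ2 * B = ChatcS * B - CcS * B := by
      simp [Δ2, Matrix.sub_mul]
    rw [h5, h6]; abel
  set δ := α / (4 - α) with hδdef
  have h4α : (0:ℝ) < 4 - α := by linarith
  have hδq : δ * (4 - α) = α := div_mul_cancel₀ _ (ne_of_gt h4α)
  have hδ3 : δ ≤ 1/3 := by
    rw [hδdef, div_le_iff₀ h4α]; linarith
  have hδ0 : 0 ≤ δ := by positivity
  have hK0 : 0 ≤ ‖K‖ := norm_nonneg _
  have hB0 : 0 ≤ ‖B‖ := norm_nonneg _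
  have hΔ1 : 0 ≤ ‖Δ1‖ := norm_nonneg _
  have hΔ2 : 0 ≤ ‖Δ2‖ := norm_nonneg _
  have hφΔ1 : ‖K‖ * ‖Δ1‖ ≤ δ := by nlinarith
  -- bound on ‖B‖
  have hBb : ‖B‖ * (1 - δ) ≤ φ := by
    have h0 : ‖B‖ ≤ ‖K‖ + ‖K‖ * ‖Δ1‖ * ‖B‖ := by
      calc ‖B‖ = ‖K - K * Δ1 * B‖ := by rw [← hid1]
        _ ≤ ‖K‖ + ‖K * Δ1 * B‖ := norm_sub_le _ _
        _ ≤ ‖K‖ + ‖K * Δ1‖ * ‖B‖ := by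
            gcongr; exact Matrix.linfty_opNorm_mul _ _
        _ ≤ ‖K‖ + ‖K‖ * ‖Δ1‖ * ‖B‖ := by
            gcongr; exact Matrix.linfty_opNorm_mul _ _
    nlinarith
  have hd2b : ‖Δ2‖ * ‖B‖ * (1 - δ) ≤ δ := by nlinarith
  have hd1b : ‖Δ1‖ * ‖B‖ * (1 - δ) ≤ δ := by nlinarith
  have hmain : ‖ChatcS * B‖ ≤ ‖Δ2‖ * ‖B‖ + (1 - α) + (1 - α) * (‖Δ1‖ * ‖B‖) := by
    calc ‖ChatcS * B‖ = ‖Δ2 * B + CcS * K - (CcS * K) * Δ1 * B‖ := by rw [← hid2]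
      _ ≤ ‖Δ2 * B + CcS * K‖ + ‖(CcS * K) * Δ1 * B‖ := norm_sub_le _ _
      _ ≤ ‖Δ2 * B‖ + ‖CcS * K‖ + ‖(CcS * K) * Δ1 * B‖ := by
          gcongr; exact norm_add_le _ _
      _ ≤ ‖Δ2‖ * ‖B‖ + (1 - α) + (1 - α) * (‖Δ1‖ * ‖B‖) := by
          refine add_le_add (add_le_add ?_ h2) ?_
          · exact Matrix.linfty_opNorm_mul _ _
          · calc ‖(CcS * K) * Δ1 * B‖ ≤ ‖(CcS * K) * Δ1‖ * ‖B‖ :=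
                Matrix.linfty_opNorm_mul _ _
              _ ≤ ‖CcS * K‖ * ‖Δ1‖ * ‖B‖ := by
                  gcongr; exact Matrix.linfty_opNorm_mul _ _
              _ ≤ (1 - α) * (‖Δ1‖ * ‖B‖) := by
                  rw [mul_assoc]
                  exact mul_le_mul_of_nonneg_right h2 (by positivity)
  have h2α : (0:ℝ) < 2 * (2 - α) := by nlinarith
  have hx2 : ‖Δ2‖ * ‖B‖ * (δ * (4 - α)) = ‖Δ2‖ * ‖B‖ * α := by rw [hδq]
  have hx1 : ‖Δ1‖ * ‖B‖ * (δ * (4 - α)) = ‖Δ1‖ * ‖B‖ * α := by rw [hδq]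
  have hA : ‖Δ2‖ * ‖B‖ ≤ α / (2 * (2 - α)) := by
    rw [le_div_iff₀ h2α]
    nlinarith [mul_le_mul_of_nonneg_right hd2b h4α.le, hx2, hδq]
  have hB' : ‖Δ1‖ * ‖B‖ ≤ α / (2 * (2 - α)) := by
    rw [le_div_iff₀ h2α]
    nlinarith [mul_le_mul_of_nonneg_right hd1b h4α.le, hx1, hδq]
  have hq : α / (2 * (2 - α)) * (2 * (2 - α)) = α := div_mul_cancel₀ _ (ne_of_gt h2α)
  have h1α : (0:ℝ) ≤ 1 - α := by linarith
  nlinarith [hmain, hA, hq, mul_le_mul_of_nonneg_left hB' h1α]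
end
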